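/- arXiv:2307.13793 — 5 statements merged into one kernel-verified Lean document; each statement's English description precedes it below -/
import Mathlib

section
/- Let H and K be real Hilbert spaces, T : H →L[ℝ] K a bounded linear operator, h₀ ∈ H, c ∈ H, λ ≥ 0, and C ⊆ H a convex set. Define F(h) = ‖T(h₀ − h)‖² + λ‖h − c‖². If h* ∈ C minimizes F over C, then for every h ∈ C: ‖T(h − h*)‖² + λ‖h − h*‖² ≤ F(h) − F(h*). -/
open RealInnerProductSpace

/-- Strong-convexity (variational) inequality for the Tikhonov-regularized criterion on a
convex set: if `h*` minimizes `F(h) = ‖T(h₀ − h)‖² + λ‖h − c‖²` over a convex `C ⊆ H`,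
then for every `h ∈ C`, `‖T(h − h*)‖² + λ‖h − h*‖² ≤ F(h) − F(h*)`. -/
theorem tikhonov_strong_convexity
    {H K : Type*} [NormedAddCommGroup H] [InnerProductSpace ℝ H] [CompleteSpace H]
    [NormedAddCommGroup K] [InnerProductSpace ℝ K] [CompleteSpace K]
    (T : H →L[ℝ] K) (h₀ c : H) (lam : ℝ) (hlam : 0 ≤ lam)
    (C : Set H) (hC : Convex ℝ C) (hstar : H) (hmem : hstar ∈ C)
    (hmin : ∀ h ∈ C,
      ‖T (h₀ - hstar)‖ ^ 2 + lam * ‖hstar - c‖ ^ 2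
        ≤ ‖T (h₀ - h)‖ ^ 2 + lam * ‖h - c‖ ^ 2) :
    ∀ h ∈ C,
      ‖T (h - hstar)‖ ^ 2 + lam * ‖h - hstar‖ ^ 2
        ≤ (‖T (h₀ - h)‖ ^ 2 + lam * ‖h - c‖ ^ 2)
          - (‖T (h₀ - hstar)‖ ^ 2 + lam * ‖hstar - c‖ ^ 2) := by
  intro h hh
  set d : H := h - hstar with hd
  set u : K := T (h₀ - hstar) with hu
  set v : K := T d with hv
  set w : H := hstar - c with hw
  set A : ℝ := ‖v‖ ^ 2 + lam * ‖d‖ ^ 2 with hA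
  set B : ℝ := -2 * ⟪u, v⟫ + 2 * (lam * ⟪w, d⟫) with hB
  have hA0 : 0 ≤ A := by positivity
  -- expansion of F at hstar + t • d
  have expand : ∀ t : ℝ,
      ‖T (h₀ - (hstar + t • d))‖ ^ 2 + lam * ‖(hstar + t • d) - c‖ ^ 2
        = (‖u‖ ^ 2 + lam * ‖w‖ ^ 2) + t ^ 2 * A + t * B := by
    intro t
    have h1 : T (h₀ - (hstar + t • d)) = u - t • v := by
      rw [hu, hv, ← map_smul, ← map_sub]; congr 1; abel
    have h2 : (hstar + t • d) - c = w + t • d := by rw [hw]; abel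
    rw [h1, h2, norm_sub_sq_real, norm_add_sq_real, real_inner_smul_right,
      real_inner_smul_right, norm_smul, norm_smul, mul_pow, mul_pow]
    simp only [Real.norm_eq_abs, sq_abs]
    ring
  -- hmin along the segment
  have key : ∀ t : ℝ, 0 ≤ t → t ≤ 1 → 0 ≤ t ^ 2 * A + t * B := by
    intro t ht0 ht1
    have hmemt : hstar + t • d ∈ C := by
      have := hC hmem hh (by linarith : (0:ℝ) ≤ 1 - t) ht0 (by ring)
      convert this using 1
      rw [hd]
      module
    have := hmin _ hmemt
    rw [expand t] at this
    linarith
  have hB0 : 0 ≤ B := by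
    by_contra hneg
    push_neg at hneg
    have h1 := key 1 zero_le_one le_rfl
    have hApos : 0 < A := by nlinarith
    have ht0 : 0 < -B / (2 * A) := div_pos (by linarith) (by positivity)
    have ht1 : -B / (2 * A) ≤ 1 := by
      rw [div_le_one (by positivity)]; nlinarith
    have := key (-B / (2 * A)) ht0.le ht1
    have htA : (-B / (2 * A)) * A = -B / 2 := by field_simp
    nlinarith [sq_nonneg (-B / (2 * A))]
  have hgoal := expand 1
  have hrw : hstar + (1:ℝ) • d = h := by rw [hd]; module
  rw [hrw] at hgoal
  rw [hgoal]
  show A ≤ _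
  linarith
end

section
/- For every real β > 0, every λ > 0, and every x ∈ [0, 1], the inequality x^β · λ² / (x + λ)² ≤ λ^{min(β, 2)} holds. -/
/-- Key spectral estimate for the Tikhonov regularization bias lemma:
for `β > 0`, `λ > 0` and `x ∈ [0,1]`, `x^β · λ² / (x + λ)² ≤ λ^(min β 2)`. -/
theorem tikhonov_spectral_bound (β lam x : ℝ) (hβ : 0 < β) (hlam : 0 < lam)
    (hx : x ∈ Set.Icc (0 : ℝ) 1) :
    x ^ β * lam ^ 2 / (x + lam) ^ 2 ≤ lam ^ min β 2 := by
  obtain ⟨hx0, hx1⟩ := hx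
  have hxl : (0:ℝ) < x + lam := by linarith
  rcases le_or_gt 2 β with h | h
  · have h3 : lam ^ (2:ℝ) = lam ^ (2:ℕ) := by
      rw [← Real.rpow_natCast]; norm_num
    rw [min_eq_right h, div_le_iff₀ (by positivity), h3]
    have hxb : x ^ β ≤ x ^ (2:ℕ) := by
      rcases eq_or_lt_of_le hx0 with rfl | hx0'
      · rw [Real.zero_rpow hβ.ne']; positivity
      · calc x ^ β ≤ x ^ (2:ℝ) := Real.rpow_le_rpow_of_exponent_ge hx0' hx1 h
          _ = x ^ (2:ℕ) := by rw [← Real.rpow_natCast]; norm_num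
    nlinarith [mul_le_mul_of_nonneg_right hxb (sq_nonneg lam), sq_nonneg lam, hx0, hlam.le, mul_nonneg hx0 hlam.le]
  · rw [min_eq_left h.le, div_le_iff₀ (by positivity)]
    have h1 : x ^ β ≤ (x + lam) ^ β :=
      Real.rpow_le_rpow hx0 (by linarith) hβ.le
    have h2 : lam ^ (2 - β) ≤ (x + lam) ^ (2 - β) :=
      Real.rpow_le_rpow hlam.le (by linarith) (by linarith)
    have hsplit : (x + lam) ^ β * (x + lam) ^ (2 - β) = (x + lam) ^ 2 := by
      rw [← Real.rpow_add hxl, ← Real.rpow_natCast (x + lam) 2]; norm_num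
    have hlsplit : lam ^ (2 - β) * lam ^ β = lam ^ 2 := by
      rw [← Real.rpow_add hlam, ← Real.rpow_natCast lam 2]; norm_num
    calc x ^ β * lam ^ 2 = x ^ β * lam ^ (2 - β) * lam ^ β := by
          rw [mul_assoc, hlsplit]
      _ ≤ (x + lam) ^ β * (x + lam) ^ (2 - β) * lam ^ β := by
          apply mul_le_mul_of_nonneg_right _ (Real.rpow_nonneg hlam.le β)
          exact mul_le_mul h1 h2 (Real.rpow_nonneg hlam.le _) (Real.rpow_nonneg hxl.le _)
      _ = lam ^ β * (x + lam) ^ 2 := by rw [hsplit, mul_comm]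
end

section
/- For every real β > 0, every λ > 0, every natural number t ≥ 1, and every x ∈ [0, 1], the inequality x^β · λ^{2t} / (x + λ)^{2t} ≤ λ^{min(β, 2t)} holds. -/
/-- Key spectral estimate for the iterated Tikhonov regularization bias lemma:
for `β > 0`, `λ > 0`, `t ≥ 1` and `x ∈ [0,1]`,
`x^β · λ^(2t) / (x + λ)^(2t) ≤ λ^(min β (2t))`. -/
theorem iterated_tikhonov_spectral_bound (β lam x : ℝ) (t : ℕ) (hβ : 0 < β) (hlam : 0 < lam)
    (ht : 1 ≤ t) (hx : x ∈ Set.Icc (0 : ℝ) 1) :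
    x ^ β * lam ^ (2 * t) / (x + lam) ^ (2 * t) ≤ lam ^ min β (2 * (t : ℝ)) := by
  obtain ⟨hx0, hx1⟩ := hx
  have hxl : 0 < x + lam := by linarith
  have hcast : ((2 * t : ℕ) : ℝ) = 2 * (t : ℝ) := by push_cast; ring
  rw [← Real.rpow_natCast lam (2 * t), ← Real.rpow_natCast (x + lam) (2 * t), hcast,
    div_le_iff₀ (Real.rpow_pos_of_pos hxl _)]
  have h2t : (0 : ℝ) < 2 * (t : ℝ) := by
    have : (1 : ℝ) ≤ (t : ℝ) := by exact_mod_cast ht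
    linarith
  rcases le_total β (2 * (t : ℝ)) with h | h
  · rw [min_eq_left h]
    have key : x ^ β * lam ^ (2 * (t : ℝ) - β) ≤ (x + lam) ^ (2 * (t : ℝ)) := by
      calc x ^ β * lam ^ (2 * (t : ℝ) - β)
          ≤ (x + lam) ^ β * (x + lam) ^ (2 * (t : ℝ) - β) := by
            apply mul_le_mul
            · exact Real.rpow_le_rpow hx0 (by linarith) hβ.le
            · exact Real.rpow_le_rpow hlam.le (by linarith) (by linarith)
            · positivity
            · positivity
        _ = (x + lam) ^ (2 * (t : ℝ)) := by
            rw [← Real.rpow_add hxl]; ring_nf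
    calc x ^ β * lam ^ (2 * (t : ℝ))
        = (x ^ β * lam ^ (2 * (t : ℝ) - β)) * lam ^ β := by
          rw [mul_assoc, ← Real.rpow_add hlam]; ring_nf
      _ ≤ (x + lam) ^ (2 * (t : ℝ)) * lam ^ β := by
          apply mul_le_mul_of_nonneg_right key (by positivity)
      _ = lam ^ β * (x + lam) ^ (2 * (t : ℝ)) := by ring
  · rw [min_eq_right h]
    have h1 : x ^ β ≤ x ^ (2 * (t : ℝ)) :=
      Real.rpow_le_rpow_of_exponent_ge' hx0 hx1 h2t.le h
    have h2 : x ^ (2 * (t : ℝ)) ≤ (x + lam) ^ (2 * (t : ℝ)) :=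
      Real.rpow_le_rpow hx0 (by linarith) h2t.le
    calc x ^ β * lam ^ (2 * (t : ℝ))
        ≤ (x + lam) ^ (2 * (t : ℝ)) * lam ^ (2 * (t : ℝ)) := by
          apply mul_le_mul_of_nonneg_right (h1.trans h2) (by positivity)
      _ = lam ^ (2 * (t : ℝ)) * (x + lam) ^ (2 * (t : ℝ)) := by ring
end

section
/- Let H and K be real Hilbert spaces and T : H →L[ℝ] K a bounded linear operator with ‖T‖ ≤ 1. Let β > 0, w₀ ∈ H, and let h₀ = (T*T)^{β/2} w₀, where the fractional power of the nonnegative selfadjoint operator T*T is defined via the continuous functional calculus. For λ > 0 let h* = (T*T + λ·id)⁻¹ (T*T h₀) be the Tikhonov-regularized solution. Then ‖h* − h₀‖² ≤ ‖w₀‖² · λ^{min(β, 2)}. -/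
/-!
With `A = T*T`, whose spectrum lies in `[0, 1]`, the normal equation gives
`h₀ - h* = r(A) w₀` for the residual `r(x) = λ x^(β/2) / (x + λ)`. Since `r(A)` is self-adjoint,
its operator norm is its spectral radius, i.e. the supremum of `|r|` over the spectrum of `A`, and
`r(x) ≤ λ^(min β 2 / 2)` on `[0, 1]`: for `β ≥ 2` because `x^(β/2) ≤ x`, for `β ≤ 2` by the
weighted AM-GM inequality `x^(β/2) λ^(1 - β/2) ≤ x + λ`.
-/

open ContinuousLinearMap Set

section

variable {H : Type*} [NormedAddCommGroup H] [InnerProductSpace ℝ H] [CompleteSpace H]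

lemma ContinuousLinearMap.spectrum_adjoint_comp_self_subset_Icc {K : Type*}
    [NormedAddCommGroup K] [InnerProductSpace ℝ K] [CompleteSpace K] {T : H →L[ℝ] K}
    (hT : ‖T‖ ≤ 1) : spectrum ℝ (adjoint T ∘L T) ⊆ Icc 0 1 := by
  rcases subsingleton_or_nontrivial H with _ | _
  · simp [spectrum.of_subsingleton]
  intro x hx
  refine ⟨SpectrumRestricts.nnreal_iff.mp (isPositive_adjoint_comp_self T).spectrumRestricts x hx,
    ?_⟩
  calc x ≤ ‖x‖ := Real.le_norm_self x
    _ ≤ ‖adjoint T ∘L T‖ := spectrum.norm_le_norm_of_mem hx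
    _ = ‖T‖ * ‖T‖ := norm_adjoint_comp_self T
    _ ≤ 1 := by nlinarith [norm_nonneg T]

variable [ContinuousFunctionalCalculus ℝ (H →L[ℝ] H) IsSelfAdjoint]

lemma norm_cfc_le_of_forall_abs_le {A : H →L[ℝ] H} (hA : IsSelfAdjoint A) {f : ℝ → ℝ}
    (hf : ContinuousOn f (spectrum ℝ A)) {c : ℝ} (hc : 0 ≤ c)
    (hfc : ∀ x ∈ spectrum ℝ A, |f x| ≤ c) : ‖cfc f A‖ ≤ c := by
  have hrad : (‖cfc f A‖₊ : ENNReal) ≤ ENNReal.ofReal c := by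
    rw [← spectralRadius_eq_nnnorm _ (cfc_predicate f A), spectralRadius,
      cfc_map_spectrum f A hA hf, iSup_image]
    refine iSup₂_le fun x hx => ?_
    rw [← enorm_eq_nnnorm, ← ofReal_norm, Real.norm_eq_abs]
    exact ENNReal.ofReal_le_ofReal (hfc x hx)
  rwa [← enorm_eq_nnnorm, ← ofReal_norm, ENNReal.ofReal_le_ofReal_iff hc] at hrad

lemma cfc_sub_eq_cfc_of_tikhonov {A : H →L[ℝ] H} (hA : IsSelfAdjoint A) {lam : ℝ}
    (hlam : -lam ∉ spectrum ℝ A) {f : ℝ → ℝ} (hf : ContinuousOn f (spectrum ℝ A)) {w h : H}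
    (heq : (A + lam • ContinuousLinearMap.id ℝ H) h = A (cfc f A w)) :
    cfc f A w - h = cfc (fun x => lam * f x / (x + lam)) A w := by
  have hne : ∀ x ∈ spectrum ℝ A, x + lam ≠ 0 := fun x hx hx0 =>
    hlam (by rwa [← eq_neg_of_add_eq_zero_left hx0])
  have hshift : A + lam • ContinuousLinearMap.id ℝ H = cfc (fun x => x + lam) A := by
    rw [cfc_add_const lam (fun x => x) A, cfc_id' ℝ A, Algebra.algebraMap_eq_smul_one]
    rfl
  have hinj : Function.Injective (A + lam • ContinuousLinearMap.id ℝ H) := by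
    rw [hshift]
    exact (isUnit_iff_bijective.mp ((isUnit_cfc_iff _ A).mpr hne)).injective
  apply hinj
  have hdiv : cfc (fun x => lam * f x) A
      = cfc (fun x => x + lam) A * cfc (fun x => lam * f x / (x + lam)) A := by
    rw [← cfc_mul _ _ A (by fun_prop) (by fun_prop (disch := exact hne))]
    exact cfc_congr fun x hx => by field_simp [hne x hx]
  calc (A + lam • ContinuousLinearMap.id ℝ H) (cfc f A w - h)
      = lam • cfc f A w := by
        rw [map_sub, heq, add_apply, add_sub_cancel_left]
        rfl
    _ = (A + lam • ContinuousLinearMap.id ℝ H) (cfc (fun x => lam * f x / (x + lam)) A w) := by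
      rw [← smul_apply, ← cfc_const_mul lam f A hf, hdiv, hshift]
      rfl

end

lemma mul_rpow_div_add_le_rpow_min {β lam x : ℝ} (hβ : 0 ≤ β) (hlam : 0 < lam) (hx₀ : 0 ≤ x)
    (hx₁ : x ≤ 1) : lam * x ^ (β / 2) / (x + lam) ≤ lam ^ (min β 2 / 2) := by
  rw [div_le_iff₀ (by positivity)]
  rcases le_total 2 β with h2 | h2
  · have hxβ : x ^ (β / 2) ≤ x := Real.rpow_le_self_of_le_one hx₀ hx₁ (by linarith)
    rw [min_eq_right h2, div_self two_ne_zero, Real.rpow_one]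
    nlinarith
  · have hamgm : x ^ (β / 2) * lam ^ (1 - β / 2) ≤ β / 2 * x + (1 - β / 2) * lam :=
      Real.geom_mean_le_arith_mean2_weighted (by positivity) (by linarith) hx₀ hlam.le (by ring)
    have hsplit : lam = lam ^ (β / 2) * lam ^ (1 - β / 2) := by
      rw [← Real.rpow_add hlam, add_sub_cancel, Real.rpow_one]
    rw [min_eq_left h2]
    calc lam * x ^ (β / 2) = lam ^ (β / 2) * (x ^ (β / 2) * lam ^ (1 - β / 2)) := by
          nth_rw 1 [hsplit]; ring
      _ ≤ lam ^ (β / 2) * (x + lam) := by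
          gcongr
          nlinarith

/-- Strong-metric Tikhonov regularization bias bound under the β-source condition:
if `‖T‖ ≤ 1`, `h₀ = (T*T)^(β/2) w₀` (fractional power via the continuous functional
calculus) and `h*` is the Tikhonov solution, i.e. `(T*T + λ·id) h* = T*T h₀`, then
`‖h* − h₀‖² ≤ ‖w₀‖² λ^(min β 2)`. -/
theorem tikhonov_bias_strong_metric
    {H K : Type*} [NormedAddCommGroup H] [InnerProductSpace ℝ H] [CompleteSpace H]
    [NormedAddCommGroup K] [InnerProductSpace ℝ K] [CompleteSpace K]
    [ContinuousFunctionalCalculus ℝ (H →L[ℝ] H) IsSelfAdjoint]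
    (T : H →L[ℝ] K) (hT : ‖T‖ ≤ 1)
    (β : ℝ) (hβ : 0 < β) (w₀ h₀ : H)
    (hsource : h₀ = cfc (fun x : ℝ => x ^ (β / 2)) (adjoint T ∘L T) w₀)
    (lam : ℝ) (hlam : 0 < lam) (hstar : H)
    (hstar_eq : (adjoint T ∘L T + lam • ContinuousLinearMap.id ℝ H) hstar
      = (adjoint T ∘L T) h₀) :
    ‖hstar - h₀‖ ^ 2 ≤ ‖w₀‖ ^ 2 * lam ^ min β 2 := by
  set A := adjoint T ∘L T
  have hA : IsSelfAdjoint A := (isPositive_adjoint_comp_self T).isSelfAdjoint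
  have hspec : spectrum ℝ A ⊆ Icc 0 1 := spectrum_adjoint_comp_self_subset_Icc hT
  have hpos : ∀ x ∈ spectrum ℝ A, 0 < x + lam := fun x hx => by linarith [(hspec hx).1]
  have hf : Continuous fun x : ℝ => x ^ (β / 2) := Real.continuous_rpow_const (by positivity)
  set r : ℝ → ℝ := fun x => lam * x ^ (β / 2) / (x + lam)
  have hres : h₀ - hstar = cfc r A w₀ := by
    rw [hsource] at hstar_eq ⊢
    exact cfc_sub_eq_cfc_of_tikhonov hA (fun h => (hpos _ h).ne' (neg_add_cancel lam))
      hf.continuousOn hstar_eq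
  have hbound : ‖cfc r A‖ ≤ lam ^ (min β 2 / 2) := by
    refine norm_cfc_le_of_forall_abs_le (f := r) hA
      ((continuous_const.mul hf).continuousOn.div (by fun_prop) fun x hx => (hpos x hx).ne')
      (by positivity) fun x hx => ?_
    have hr_nonneg : 0 ≤ r x := by
      have := (hspec hx).1
      positivity
    rw [abs_of_nonneg hr_nonneg]
    exact mul_rpow_div_add_le_rpow_min hβ.le hlam (hspec hx).1 (hspec hx).2
  calc ‖hstar - h₀‖ ^ 2 = ‖cfc r A w₀‖ ^ 2 := by rw [norm_sub_rev, hres]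
    _ ≤ (lam ^ (min β 2 / 2) * ‖w₀‖) ^ 2 := by
        gcongr
        exact (le_opNorm _ _).trans (mul_le_mul_of_nonneg_right hbound (norm_nonneg _))
    _ = ‖w₀‖ ^ 2 * lam ^ min β 2 := by
        rw [mul_pow, ← Real.rpow_natCast, ← Real.rpow_mul hlam.le, Nat.cast_ofNat,
          div_mul_cancel₀ _ two_ne_zero, mul_comm]
end

section
/- Let H and K be real Hilbert spaces and T : H →L[ℝ] K a bounded linear operator with ‖T‖ ≤ 1. Let β > 0, w₀ ∈ H, and let h₀ = (T*T)^{β/2} w₀, where the fractional power of the nonnegative selfadjoint operator T*T is defined via the continuous functional calculus. For λ > 0 let h* = (T*T + λ·id)⁻¹ (T*T h₀) be the Tikhonov-regularized solution. Then ‖T(h* − h₀)‖² ≤ ‖w₀‖² · λ^{min(β + 1, 2)}. -/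
/-!
Write `A = T*T`, whose spectrum lies in `[0, 1]`. Solving the normal equation through the
functional calculus gives `h* - h₀ = g(A) w₀` with `g x = -λ x^(β/2) / (x + λ)`, hence
`‖T(h* - h₀)‖² = ⟪(g · id · g)(A) w₀, w₀⟫`. On `[0, 1]` the filter `x g(x)² = λ² x^(β+1) / (x + λ)²`
is at most `λ^s` with `s = min (β + 1) 2`, because `x^(β+1) ≤ x^s` and
`λ^(2-s) x^s ≤ (x + λ)^(2-s) (x + λ)^s`.
-/

open ContinuousLinearMap
open scoped InnerProductSpace

lemma sq_mul_rpow_le_rpow_mul_add_sq {l x s : ℝ} (hl : 0 < l) (hx : 0 ≤ x) (hs₀ : 0 ≤ s)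
    (hs₂ : s ≤ 2) : l ^ 2 * x ^ s ≤ l ^ s * (x + l) ^ 2 := by
  have hxl : 0 < x + l := by linarith
  have split : ∀ {y : ℝ}, 0 < y → y ^ 2 = y ^ s * y ^ (2 - s) := fun hy => by
    rw [← Real.rpow_add hy, add_sub_cancel, Real.rpow_two]
  calc l ^ 2 * x ^ s = l ^ s * (l ^ (2 - s) * x ^ s) := by rw [split hl]; ring
    _ ≤ l ^ s * ((x + l) ^ (2 - s) * (x + l) ^ s) := by
      gcongr <;> linarith
    _ = l ^ s * (x + l) ^ 2 := by rw [split hxl, mul_comm ((x + l) ^ s)]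

lemma tikhonov_filter_bound {l β x : ℝ} (hl : 0 < l) (hβ : 0 < β) (hx₀ : 0 ≤ x) (hx₁ : x ≤ 1) :
    -l * x ^ (β / 2) / (x + l) * x * (-l * x ^ (β / 2) / (x + l)) ≤ l ^ min (β + 1) 2 := by
  have hxl : 0 < x + l := by linarith
  have hpow : x ^ (β / 2) * x * x ^ (β / 2) = x ^ (β + 1) := by
    rw [← Real.rpow_add_one' hx₀ (by linarith), ← Real.rpow_add' hx₀ (by linarith)]
    ring_nf
  have hmono : x ^ (β + 1) ≤ x ^ min (β + 1) 2 :=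
    Real.rpow_le_rpow_of_exponent_ge' hx₀ hx₁ (by positivity) (min_le_left _ _)
  calc -l * x ^ (β / 2) / (x + l) * x * (-l * x ^ (β / 2) / (x + l))
        = l ^ 2 * x ^ (β + 1) / (x + l) ^ 2 := by rw [← hpow]; field_simp
    _ ≤ l ^ 2 * x ^ min (β + 1) 2 / (x + l) ^ 2 := by gcongr
    _ ≤ l ^ min (β + 1) 2 := by
      rw [div_le_iff₀ (by positivity)]
      exact sq_mul_rpow_le_rpow_mul_add_sq hl hx₀ (by positivity) (min_le_right _ _)

namespace ContinuousLinearMap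

variable {H : Type*} [NormedAddCommGroup H] [InnerProductSpace ℝ H] [CompleteSpace H]

lemma spectrum_adjoint_comp_self_subset_Icc_s10 {K : Type*} [NormedAddCommGroup K]
    [InnerProductSpace ℝ K] [CompleteSpace K] (T : H →L[ℝ] K) :
    spectrum ℝ (adjoint T ∘L T) ⊆ Set.Icc 0 (‖T‖ ^ 2) := by
  intro x hx
  refine ⟨SpectrumRestricts.nnreal_iff.mp
    (isPositive_adjoint_comp_self T).spectrumRestricts x hx, ?_⟩
  calc x ≤ ‖x‖ := Real.le_norm_self x
    _ ≤ ‖adjoint T ∘L T‖ * ‖(1 : H →L[ℝ] H)‖ := spectrum.norm_le_norm_mul_of_mem hx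
    _ ≤ ‖adjoint T ∘L T‖ * 1 := by gcongr; exact norm_id_le
    _ = ‖T‖ ^ 2 := by rw [mul_one, norm_adjoint_comp_self, sq]

lemma real_inner_mul_self_apply_self {P : H →L[ℝ] H} (hP : IsSelfAdjoint P) (w : H) :
    ⟪(P * P) w, w⟫_ℝ = ‖P w‖ ^ 2 := by
  rw [mul_apply_eq_comp, ← hP.adjoint_eq, adjoint_inner_left, hP.adjoint_eq,
    real_inner_self_eq_norm_sq]

lemma apply_norm_sq_eq_inner_mul_adjoint_comp_self_mul {K : Type*} [NormedAddCommGroup K]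
    [InnerProductSpace ℝ K] [CompleteSpace K] (T : H →L[ℝ] K) {P : H →L[ℝ] H}
    (hP : IsSelfAdjoint P) (w : H) :
    ‖T (P w)‖ ^ 2 = ⟪(P * (adjoint T ∘L T) * P) w, w⟫_ℝ := by
  rw [apply_norm_sq_eq_inner_adjoint_left, mul_apply_eq_comp, mul_apply_eq_comp, ← hP.adjoint_eq,
    adjoint_inner_left, hP.adjoint_eq]
  rfl

variable [ContinuousFunctionalCalculus ℝ (H →L[ℝ] H) IsSelfAdjoint]

lemma real_inner_cfc_apply_self_le {A : H →L[ℝ] H} (hA : IsSelfAdjoint A) {f : ℝ → ℝ} {c : ℝ}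
    (hf : ContinuousOn f (spectrum ℝ A)) (hfc : ∀ x ∈ spectrum ℝ A, f x ≤ c) (w : H) :
    ⟪cfc f A w, w⟫_ℝ ≤ c * ‖w‖ ^ 2 := by
  set r : ℝ → ℝ := fun x => √(c - f x)
  have hr : ContinuousOn r (spectrum ℝ A) := (continuousOn_const.sub hf).sqrt
  -- The functional calculus carries no norm estimate; instead `c - f(A) = r(A)²` is positive.
  have hsum : cfc f A + cfc r A * cfc r A = algebraMap ℝ (H →L[ℝ] H) c := by
    rw [← cfc_mul r r A, ← cfc_add A f _ hf, ← cfc_const c A]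
    exact cfc_congr fun x hx => by
      simp only [r]; rw [Real.mul_self_sqrt (sub_nonneg.mpr (hfc x hx))]; ring
  have := congrArg (fun S : H →L[ℝ] H => ⟪S w, w⟫_ℝ) hsum
  simp only [add_apply, inner_add_left, real_inner_mul_self_apply_self (cfc_predicate r A),
    Algebra.algebraMap_eq_smul_one, smul_apply, one_apply_eq_self, real_inner_smul_left,
    real_inner_self_eq_norm_sq] at this
  nlinarith [sq_nonneg ‖cfc r A w‖]

lemma eq_cfc_div_apply_of_add_smul_apply_eq {A : H →L[ℝ] H} (hA : IsSelfAdjoint A) {l : ℝ}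
    (hl : ∀ x ∈ spectrum ℝ A, x + l ≠ 0) {f : ℝ → ℝ} (hf : ContinuousOn f (spectrum ℝ A))
    {y z : H} (hz : (A + l • 1) z = cfc f A y) :
    z = cfc (fun x => f x / (x + l)) A y := by
  have hcont : ContinuousOn (fun x : ℝ => x + l) (spectrum ℝ A) := by fun_prop
  have hinv : ContinuousOn (fun x : ℝ => (x + l)⁻¹) (spectrum ℝ A) := hcont.inv₀ hl
  have hAl : A + l • 1 = cfc (fun x : ℝ => x + l) A := by
    rw [cfc_add_const l _ A, cfc_id' ℝ A, Algebra.algebraMap_eq_smul_one]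
  have hleft : cfc (fun x : ℝ => (x + l)⁻¹) A * (A + l • 1) = 1 := by
    rw [hAl, ← cfc_mul _ _ A hinv hcont, ← cfc_one ℝ A]
    exact cfc_congr fun x hx => inv_mul_cancel₀ (hl x hx)
  calc z = (cfc (fun x : ℝ => (x + l)⁻¹) A * (A + l • 1)) z := by rw [hleft, one_apply_eq_self]
    _ = (cfc (fun x : ℝ => (x + l)⁻¹) A * cfc f A) y := by
      rw [mul_apply_eq_comp, hz, mul_apply_eq_comp]
    _ = cfc (fun x => f x / (x + l)) A y := by
      rw [← cfc_mul _ _ A hinv hf]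
      exact congrFun (congrArg DFunLike.coe (cfc_congr fun x _ => by ring)) y

end ContinuousLinearMap

/-- Weak-metric Tikhonov regularization bias bound under the β-source condition:
if `‖T‖ ≤ 1`, `h₀ = (T*T)^(β/2) w₀` (fractional power via the continuous functional
calculus) and `h*` is the Tikhonov solution, i.e. `(T*T + λ·id) h* = T*T h₀`, then
`‖T(h* − h₀)‖² ≤ ‖w₀‖² λ^(min (β+1) 2)`. -/
theorem tikhonov_bias_weak_metric
    {H K : Type*} [NormedAddCommGroup H] [InnerProductSpace ℝ H] [CompleteSpace H]
    [NormedAddCommGroup K] [InnerProductSpace ℝ K] [CompleteSpace K]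
    [ContinuousFunctionalCalculus ℝ (H →L[ℝ] H) (IsSelfAdjoint : (H →L[ℝ] H) → Prop)]
    (T : H →L[ℝ] K) (hT : ‖T‖ ≤ 1)
    (β : ℝ) (hβ : 0 < β) (w₀ h₀ : H)
    (hsource : h₀ = cfc (fun x : ℝ => x ^ (β / 2)) (adjoint T ∘L T) w₀)
    (lam : ℝ) (hlam : 0 < lam) (hstar : H)
    (hstar_eq : (adjoint T ∘L T + lam • ContinuousLinearMap.id ℝ H) hstar
      = (adjoint T ∘L T) h₀) :
    ‖T (hstar - h₀)‖ ^ 2 ≤ ‖w₀‖ ^ 2 * lam ^ min (β + 1) 2 := by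
  set A := adjoint T ∘L T
  have hA : IsSelfAdjoint A := (isPositive_adjoint_comp_self T).isSelfAdjoint
  have hspec : ∀ x ∈ spectrum ℝ A, 0 ≤ x ∧ x ≤ 1 := fun x hx =>
    have hx := spectrum_adjoint_comp_self_subset_Icc_s10 T hx
    ⟨hx.1, hx.2.trans (pow_le_one₀ (norm_nonneg T) hT)⟩
  set g : ℝ → ℝ := fun x => -lam * x ^ (β / 2) / (x + lam)
  have hpow : ContinuousOn (fun x : ℝ => x ^ (β / 2)) (spectrum ℝ A) :=
    (Real.continuous_rpow_const (by positivity)).continuousOn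
  have hsrc : ContinuousOn (fun x : ℝ => -lam * x ^ (β / 2)) (spectrum ℝ A) :=
    continuousOn_const.mul hpow
  have hg : ContinuousOn g (spectrum ℝ A) :=
    hsrc.div (by fun_prop) fun x hx => by linarith [hspec x hx]
  have hres : (A + lam • 1) (hstar - h₀) = cfc (fun x : ℝ => -lam * x ^ (β / 2)) A w₀ := by
    rw [← one_def] at hstar_eq
    rw [cfc_const_mul (-lam) _ A hpow, smul_apply, ← hsource, map_sub, hstar_eq]
    simp
  have hbias : hstar - h₀ = cfc g A w₀ :=
    eq_cfc_div_apply_of_add_smul_apply_eq hA (fun x hx => by linarith [hspec x hx]) hsrc hres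
  have hPAP : cfc g A * A * cfc g A = cfc (fun x => g x * x * g x) A := by
    rw [cfc_mul (fun x => g x * x) g A (hg.mul continuousOn_id) hg,
      cfc_mul g (fun x => x) A hg continuousOn_id, cfc_id' ℝ A]
  rw [hbias, apply_norm_sq_eq_inner_mul_adjoint_comp_self_mul T (cfc_predicate g A), hPAP,
    mul_comm (‖w₀‖ ^ 2)]
  exact real_inner_cfc_apply_self_le hA (hg.mul continuousOn_id |>.mul hg)
    (fun x hx => tikhonov_filter_bound hlam hβ (hspec x hx).1 (hspec x hx).2) w₀
end
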